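/- arXiv:2004.14184 — 5 statements merged into one kernel-verified Lean document; each statement's English description precedes it below -/
import Mathlib

section
/- Let Σ be a real (n+1)×(n+1) positive definite Toeplitz matrix, R = diag(r_1,…,r_{n+1}) with 0 < r_1 ≤ r_2 ≤ … ≤ r_{n+1}, and let b = (b_0,…,b_n)ᵀ ∈ ℝ^{n+1} be a nonzero vector satisfying (Σ + R) b = c·e_1 for some real c, where e_1 = (1,0,…,0)ᵀ. Then every root of the polynomial b(z) = b_0 + b_1 z^{−1} + … + b_n z^{−n} (equivalently, every zero of b_0 z^n + b_1 z^{n−1} + … + b_n) lies strictly inside the unit circle. -/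
/-!
Suppose `z` is a root with `‖z‖ ≥ 1`. Synthetic division of `b(w)` by `w - z` writes
`b = u - z v`, where `u` and `v` are the coefficient vector `q` of the quotient padded with a
zero at the end and at the start. Put `A = Σ + R`. Since `A b` is a multiple of `e₁` and
`v₀ = 0`, `v* A b = 0`, and expanding gives `b* A b = u* A u - ‖z‖² v* A v`. As `u` and `v` are
shifts of each other, the Toeplitz part gives `u* Σ u = v* Σ v`, and monotonicity of `R`
gives `u* R u ≤ v* R v`. Hence `0 < b* A b ≤ (1 - ‖z‖²) v* A v ≤ 0`.
-/

open Matrix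

/-- A matrix is Toeplitz if its entries depend only on the difference of indices. -/
def IsToeplitz {n : ℕ} (M : Matrix (Fin (n+1)) (Fin (n+1)) ℝ) : Prop :=
  ∀ i j k l : Fin (n+1), (i : ℤ) - (j : ℤ) = (k : ℤ) - (l : ℤ) → M i j = M k l

open scoped ComplexOrder

namespace Matrix

section Hermitian

variable {ι : Type*} [Fintype ι]

lemma re_star_dotProduct_map_ofReal_mulVec (M : Matrix ι ι ℝ) (x : ι → ℂ) :
    (star x ⬝ᵥ M.map (↑) *ᵥ x).re =
      (Complex.re ∘ x) ⬝ᵥ M *ᵥ (Complex.re ∘ x) + (Complex.im ∘ x) ⬝ᵥ M *ᵥ (Complex.im ∘ x) := by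
  simp only [dotProduct, mulVec, Complex.re_sum, Finset.mul_sum, ← Finset.sum_add_distrib]
  refine Finset.sum_congr rfl fun k _ => Finset.sum_congr rfl fun l _ => ?_
  simp [Complex.mul_re, Complex.mul_im]

lemma re_star_dotProduct_map_ofReal_mulVec_le {M N : Matrix ι ι ℝ} (h : (N - M).PosSemidef)
    (x : ι → ℂ) : (star x ⬝ᵥ M.map (↑) *ᵥ x).re ≤ (star x ⬝ᵥ N.map (↑) *ᵥ x).re := by
  have hre := h.dotProduct_mulVec_nonneg (Complex.re ∘ x)
  have him := h.dotProduct_mulVec_nonneg (Complex.im ∘ x)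
  simp only [star_trivial, sub_mulVec, dotProduct_sub, sub_nonneg] at hre him
  rw [re_star_dotProduct_map_ofReal_mulVec, re_star_dotProduct_map_ofReal_mulVec]
  exact add_le_add hre him

lemma PosDef.map_ofReal {M : Matrix ι ι ℝ} (hM : M.PosDef) :
    (M.map (↑) : Matrix ι ι ℂ).PosDef := by
  have hherm : (M.map (↑) : Matrix ι ι ℂ).IsHermitian :=
    hM.isHermitian.map _ fun _ => by simp
  refine .of_dotProduct_mulVec_pos hherm fun x hx =>
    RCLike.pos_iff.2 ⟨?_, hherm.im_star_dotProduct_mulVec_self x⟩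
  have hnonneg (y : ι → ℝ) : 0 ≤ y ⬝ᵥ M *ᵥ y := by
    simpa using hM.posSemidef.dotProduct_mulVec_nonneg y
  have hpos {y : ι → ℝ} (hy : y ≠ 0) : 0 < y ⬝ᵥ M *ᵥ y := by
    simpa using hM.dotProduct_mulVec_pos hy
  change 0 < (star x ⬝ᵥ M.map (↑) *ᵥ x).re
  rw [re_star_dotProduct_map_ofReal_mulVec]
  by_cases hre : Complex.re ∘ x = 0
  · have him : Complex.im ∘ x ≠ 0 := fun him =>
      hx (funext fun k => Complex.ext (congrFun hre k) (congrFun him k))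
    linarith [hnonneg (Complex.re ∘ x), hpos him]
  · linarith [hpos hre, hnonneg (Complex.im ∘ x)]

variable {R : Type*} [CommRing R] [StarRing R]

lemma IsHermitian.star_dotProduct_mulVec_sub_smul {A : Matrix ι ι R} (hA : A.IsHermitian)
    {u v : ι → R} {z : R} (h : star v ⬝ᵥ A *ᵥ (u - z • v) = 0) :
    star (u - z • v) ⬝ᵥ A *ᵥ (u - z • v) =
      star u ⬝ᵥ A *ᵥ u - (star z * z) * star (star v ⬝ᵥ A *ᵥ v) := by
  have hsymm : star u ⬝ᵥ A *ᵥ v = star (star v ⬝ᵥ A *ᵥ u) := by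
    rw [← star_dotProduct_star, star_star, star_mulVec, ← dotProduct_mulVec, hA.eq]
  simp only [mulVec_sub, mulVec_smul, dotProduct_sub, dotProduct_smul, sub_dotProduct, star_sub,
    star_smul, smul_dotProduct, smul_eq_mul] at h ⊢
  rw [hsymm]
  have hstar := congrArg star h
  simp only [star_sub, star_mul', star_zero] at hstar
  linear_combination (-star z) * h - z * hstar

end Hermitian

section Shift

variable {n : ℕ} {R : Type*} [Semiring R] [StarRing R]

lemma star_snoc_dotProduct_mulVec_snoc (A : Matrix (Fin (n+1)) (Fin (n+1)) R) (q : Fin n → R) :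
    star (Fin.snoc q 0 : Fin (n+1) → R) ⬝ᵥ A *ᵥ Fin.snoc q 0 =
      star q ⬝ᵥ A.submatrix Fin.castSucc Fin.castSucc *ᵥ q := by
  simp [dotProduct, mulVec, Fin.sum_univ_castSucc]

lemma star_cons_dotProduct_mulVec_cons (A : Matrix (Fin (n+1)) (Fin (n+1)) R) (q : Fin n → R) :
    star (Fin.cons 0 q : Fin (n+1) → R) ⬝ᵥ A *ᵥ Fin.cons 0 q =
      star q ⬝ᵥ A.submatrix Fin.succ Fin.succ *ᵥ q := by
  simp [dotProduct, mulVec, Fin.sum_univ_succ]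

lemma re_star_snoc_dotProduct_le_star_cons_dotProduct {M : Matrix (Fin (n+1)) (Fin (n+1)) ℝ}
    (hM : (M.submatrix Fin.succ Fin.succ - M.submatrix Fin.castSucc Fin.castSucc).PosSemidef)
    (q : Fin n → ℂ) :
    (star (Fin.snoc q 0 : Fin (n+1) → ℂ) ⬝ᵥ M.map (↑) *ᵥ Fin.snoc q 0).re ≤
      (star (Fin.cons 0 q : Fin (n+1) → ℂ) ⬝ᵥ M.map (↑) *ᵥ Fin.cons 0 q).re := by
  rw [star_snoc_dotProduct_mulVec_snoc, star_cons_dotProduct_mulVec_cons, submatrix_map,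
    submatrix_map]
  exact re_star_dotProduct_map_ofReal_mulVec_le hM q

end Shift

end Matrix

section

variable {n : ℕ}

lemma IsToeplitz.submatrix_castSucc_eq_submatrix_succ {S : Matrix (Fin (n+1)) (Fin (n+1)) ℝ}
    (hS : IsToeplitz S) : S.submatrix Fin.castSucc Fin.castSucc = S.submatrix Fin.succ Fin.succ :=
  Matrix.ext fun i j => hS _ _ _ _ (by simp)

lemma IsToeplitz.posSemidef_add_diagonal_submatrix_succ_sub_castSucc
    {S : Matrix (Fin (n+1)) (Fin (n+1)) ℝ} (hS : IsToeplitz S) {r : Fin (n+1) → ℝ}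
    (hr : Monotone r) :
    ((S + diagonal r).submatrix Fin.succ Fin.succ -
      (S + diagonal r).submatrix Fin.castSucc Fin.castSucc).PosSemidef := by
  simp only [submatrix_add, Pi.add_apply]
  rw [hS.submatrix_castSucc_eq_submatrix_succ, add_sub_add_left_eq_sub,
    submatrix_diagonal _ _ (Fin.succ_injective _), submatrix_diagonal _ _ (Fin.castSucc_injective _),
    diagonal_sub]
  exact .diagonal fun i => sub_nonneg.2 (hr (Fin.castSucc_le_succ i))

def partialHorner {R : Type*} [Semiring R] (b : ℕ → R) (z : R) : ℕ → R
  | 0 => 0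
  | m + 1 => z * partialHorner b z m + b m

lemma partialHorner_succ_eq_sum {R : Type*} [CommSemiring R] (b : ℕ → R) (z : R) (m : ℕ) :
    partialHorner b z (m + 1) = ∑ j ∈ Finset.range (m + 1), b j * z ^ (m - j) := by
  induction m with
  | zero => simp [partialHorner]
  | succ m ih =>
    rw [partialHorner, ih, Finset.sum_range_succ _ (m + 1), Finset.mul_sum]
    congr 1
    · refine Finset.sum_congr rfl fun j hj => ?_
      rw [Nat.sub_add_comm (Finset.mem_range_succ_iff.1 hj), pow_succ]
      ring
    · simp

/-- Synthetic division by `w - z`: the quotient's coefficients are the partial Horner sums. -/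
lemma exists_eq_snoc_sub_smul_cons {R : Type*} [CommRing R] (b : Fin (n+1) → R) {z : R}
    (hz : ∑ k : Fin (n+1), b k * z ^ (n - k) = 0) :
    ∃ q : Fin n → R, b = Fin.snoc q 0 - z • Fin.cons 0 q := by
  set P := partialHorner (fun j => if h : j < n + 1 then b ⟨j, h⟩ else 0) z
  have hPn : P (n + 1) = 0 := by
    rw [show P (n + 1) = _ from partialHorner_succ_eq_sum .., ← Fin.sum_univ_eq_sum_range]
    simpa [Fin.is_le] using hz
  refine ⟨fun m => P (m + 1), funext fun k => ?_⟩
  have hsnoc : (Fin.snoc (fun m : Fin n => P (m + 1)) 0 : Fin (n+1) → R) k = P (k + 1) := by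
    induction k using Fin.lastCases <;> simp [hPn]
  have hcons : (Fin.cons 0 (fun m : Fin n => P (m + 1)) : Fin (n+1) → R) k = P k := by
    induction k using Fin.cases <;> simp [P, partialHorner]
  rw [Pi.sub_apply, Pi.smul_apply, hsnoc, hcons, smul_eq_mul]
  simp [P, partialHorner, Fin.is_le]

lemma Matrix.PosDef.norm_lt_one_of_mulVec_eq_single {M : Matrix (Fin (n+1)) (Fin (n+1)) ℝ}
    (hM : M.PosDef)
    (hshift : (M.submatrix Fin.succ Fin.succ - M.submatrix Fin.castSucc Fin.castSucc).PosSemidef)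
    {b : Fin (n+1) → ℝ} (hb : b ≠ 0) {c : ℝ} (hMb : M *ᵥ b = c • Pi.single 0 1) {z : ℂ}
    (hz : ∑ k : Fin (n+1), (b k : ℂ) * z ^ (n - (k : ℕ)) = 0) : ‖z‖ < 1 := by
  by_contra! hz1
  have hA : (M.map (↑) : Matrix _ _ ℂ).PosDef := hM.map_ofReal
  obtain ⟨q, hq⟩ := exists_eq_snoc_sub_smul_cons (fun k => (b k : ℂ)) hz
  have hAb : M.map (↑) *ᵥ (fun k => (b k : ℂ)) = fun k => ((M *ᵥ b) k : ℂ) :=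
    funext fun k => (RingHom.map_mulVec Complex.ofRealHom M b k).symm
  have hvb : star (Fin.cons 0 q : Fin (n+1) → ℂ) ⬝ᵥ
      M.map (↑) *ᵥ (Fin.snoc q 0 - z • Fin.cons 0 q) = 0 := by
    simp [← hq, hAb, hMb, dotProduct, Pi.single_apply, apply_ite]
  have hbpos := hA.re_dotProduct_pos (x := fun k => (b k : ℂ))
    fun h => hb (funext fun k => by simpa using congrFun h k)
  rw [hq, RCLike.re_to_complex] at hbpos
  have hexpand := congrArg Complex.re (hA.isHermitian.star_dotProduct_mulVec_sub_smul hvb)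
  rw [Complex.star_def, Complex.conj_mul', Complex.sub_re, ← Complex.ofReal_pow,
    Complex.re_ofReal_mul, Complex.conj_re] at hexpand
  have hle := re_star_snoc_dotProduct_le_star_cons_dotProduct hshift q
  have hv := hA.posSemidef.re_dotProduct_nonneg (Fin.cons 0 q)
  rw [RCLike.re_to_complex] at hv
  linarith [mul_le_mul_of_nonneg_right (one_le_pow₀ hz1 : (1 : ℝ) ≤ ‖z‖ ^ 2) hv]

end

/-- Proposition 1: minimum phase property of the regularized Yule-Walker solution
with diagonal regularization. -/
theorem regularized_yule_walker_min_phase_DI {n : ℕ}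
    (S : Matrix (Fin (n+1)) (Fin (n+1)) ℝ)
    (hpd : S.PosDef) (htoep : IsToeplitz S)
    (r : Fin (n+1) → ℝ)
    (hrpos : ∀ k, 0 < r k) (hrmono : Monotone r)
    (b : Fin (n+1) → ℝ) (hb : b ≠ 0) (c : ℝ)
    (hYW : (S + Matrix.diagonal r) *ᵥ b = c • ((Pi.single (0 : Fin (n+1)) (1 : ℝ)) : Fin (n+1) → ℝ)) :
    ∀ z : ℂ, (∑ k : Fin (n+1), (b k : ℂ) * z ^ (n - (k : ℕ))) = 0 → ‖z‖ < 1 :=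
  fun _ hz => (hpd.add_posSemidef (.diagonal fun k => (hrpos k).le)).norm_lt_one_of_mulVec_eq_single
    (htoep.posSemidef_add_diagonal_submatrix_succ_sub_castSucc hrmono) hb hYW hz
end

section
/- Let F be the (n+1)×(n+1) lower bidiagonal matrix with 1's on the diagonal and −1's on the first subdiagonal, and D = (β − β²)^{−1} · diag(1, β^{−1}, β^{−2}, …, β^{−n}) for β ∈ (0,1). Then the matrix K_{TC} with entries [K_{TC}]_{ts} = β^{max(t,s)} − β^{n+2} for t,s = 1,…,n+1 satisfies K_{TC} = (F D Fᵀ)^{−1}. -/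
/-!
With `L` the lower-triangular all-ones matrix, `L * F = 1`, and
`Lᵀ * diag(w) * L` has `(t, s)` entry `∑_{k ≥ max t s} w k`. For `w k = β^(k+1) - β^(k+2)` this sum
telescopes to `β^(max t s + 1) - β^(n+2)`, so `K_TC = Lᵀ Λ L` with `Λ = (β - β²) diag(β^k)`.
Inverting, `K_TC⁻¹ = F Λ⁻¹ Fᵀ = F D Fᵀ`.
-/

open Matrix

/-- The first-difference matrix: 1's on the diagonal and -1's on the first subdiagonal. -/
def diffMatrix (n : ℕ) : Matrix (Fin (n+1)) (Fin (n+1)) ℝ :=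
  fun i j => if i = j then 1 else if (j : ℕ) + 1 = (i : ℕ) then -1 else 0

def lowerOnes (n : ℕ) : Matrix (Fin (n+1)) (Fin (n+1)) ℝ :=
  of fun i j => if j ≤ i then 1 else 0

/-- Indices are shifted down by one from the paper's `t, s = 1, …, n+1`. -/
def tcKernel (n : ℕ) (β : ℝ) : Matrix (Fin (n+1)) (Fin (n+1)) ℝ :=
  of fun t s => β ^ (max (t : ℕ) s + 1) - β ^ (n + 2)

lemma diffMatrix_apply {n : ℕ} (i j : Fin (n+1)) :
    diffMatrix n i j = (if (i : ℕ) = j then 1 else 0) - (if (i : ℕ) = j + 1 then 1 else 0) := by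
  simp only [diffMatrix, Fin.ext_iff]
  split_ifs <;> first | omega | norm_num

lemma lowerOnes_mul_diffMatrix (n : ℕ) : lowerOnes n * diffMatrix n = 1 := by
  ext i j
  simp only [mul_apply, lowerOnes, of_apply, diffMatrix_apply, Fin.le_def, one_apply, Fin.ext_iff]
  rw [Fin.sum_univ_eq_sum_range (fun k => (if k ≤ (i : ℕ) then (1:ℝ) else 0) *
      ((if k = j then 1 else 0) - if k = j + 1 then 1 else 0))]
  simp only [mul_sub, Finset.sum_sub_distrib, mul_ite, mul_one, mul_zero, Finset.sum_ite_eq',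
    Finset.mem_range]
  have hi := i.isLt
  have hj := j.isLt
  split_ifs <;> first | omega | norm_num

theorem Matrix.inv_mul_mul_transpose_eq {ι R : Type*} [Fintype ι] [DecidableEq ι] [CommRing R]
    {F G D E : Matrix ι ι R} (hGF : G * F = 1) (hDE : D * E = 1) :
    (F * D * Fᵀ)⁻¹ = Gᵀ * E * G := by
  refine inv_eq_right_inv ?_
  calc F * D * Fᵀ * (Gᵀ * E * G) = F * D * (G * F)ᵀ * E * G := by
        simp only [transpose_mul, Matrix.mul_assoc]
    _ = F * G := by rw [hGF, transpose_one, Matrix.mul_one, Matrix.mul_assoc F, hDE, Matrix.mul_one]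
    _ = 1 := mul_eq_one_comm.mp hGF

lemma smul_diagonal_inv_mul_smul_diagonal {ι K : Type*} [Fintype ι] [DecidableEq ι] [Field K]
    {c : K} (hc : c ≠ 0) {d : ι → K} (hd : ∀ i, d i ≠ 0) :
    (c⁻¹ • diagonal fun i => (d i)⁻¹) * (c • diagonal d) = 1 := by
  rw [smul_mul_smul_comm, inv_mul_cancel₀ hc, one_smul, diagonal_mul_diagonal]
  simp_rw [inv_mul_cancel₀ (hd _), diagonal_one]

lemma lowerOnes_transpose_mul_diagonal_mul_lowerOnes_apply {n : ℕ} (w : ℕ → ℝ)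
    (t s : Fin (n+1)) :
    ((lowerOnes n)ᵀ * diagonal (fun i : Fin (n+1) => w i) * lowerOnes n) t s
      = ∑ k ∈ Finset.Ico (max (t : ℕ) s) (n+1), w k := by
  rw [mul_apply]
  simp only [mul_diagonal, transpose_apply, lowerOnes, of_apply, Fin.le_def,
    ite_mul, one_mul, zero_mul, mul_ite, mul_one, mul_zero, ← ite_and]
  rw [Fin.sum_univ_eq_sum_range (fun k => if (s : ℕ) ≤ k ∧ (t : ℕ) ≤ k then w k else 0),
    ← Finset.sum_filter]
  congr 1
  ext k
  simp only [Finset.mem_filter, Finset.mem_range, Finset.mem_Ico, max_le_iff]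
  tauto

lemma lowerOnes_transpose_mul_smul_diagonal_pow_mul_lowerOnes (n : ℕ) (β : ℝ) :
    (lowerOnes n)ᵀ * ((β - β ^ 2) • diagonal fun i : Fin (n+1) => β ^ (i : ℕ)) * lowerOnes n
      = tcKernel n β := by
  ext t s
  rw [Matrix.mul_smul, Matrix.smul_mul, Matrix.smul_apply,
    lowerOnes_transpose_mul_diagonal_mul_lowerOnes_apply, tcKernel, of_apply, smul_eq_mul]
  have hm : max (t : ℕ) s ≤ n + 1 := by omega
  linear_combination (-β) * geom_sum_Ico_mul β hm

theorem TC_kernel_inverse_factorization {n : ℕ} (β : ℝ) (hβ : β ∈ Set.Ioo (0:ℝ) 1) :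
    (fun t s : Fin (n+1) => β ^ (max (t : ℕ) (s : ℕ) + 1) - β ^ (n + 2)
      : Matrix (Fin (n+1)) (Fin (n+1)) ℝ)
      = (diffMatrix n
          * ((β - β ^ 2)⁻¹ • Matrix.diagonal (fun i : Fin (n+1) => (β ^ (i : ℕ))⁻¹))
          * (diffMatrix n)ᵀ)⁻¹ := by
  obtain ⟨hβ0, hβ1⟩ := hβ
  have hc : β - β ^ 2 ≠ 0 := (by nlinarith : 0 < β - β ^ 2).ne'
  have hD := smul_diagonal_inv_mul_smul_diagonal hc
    fun i : Fin (n+1) => pow_ne_zero (i : ℕ) hβ0.ne'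
  rw [inv_mul_mul_transpose_eq (lowerOnes_mul_diffMatrix n) hD,
    lowerOnes_transpose_mul_smul_diagonal_pow_mul_lowerOnes]
  rfl
end

section
/- For β ∈ (0,1), the Tuned-Correlated kernel matrix K_{TC} with entries [K_{TC}]_{ts} = β^{max(t,s)} − β^{n+2}, t,s = 1,…,n+1, is positive definite. -/
/-!
With `U` the upper unitriangular matrix of ones, `U t k = [t ≤ k]`, every matrix of the form
`(t, s) ↦ ∑_{k ≥ max t s} c k` equals `U * diagonal c * Uᵀ`, hence is positive definite as soon
as all `c k > 0`, because `Uᵀ` has determinant `1`. The kernel is of this form: telescoping gives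
`β ^ (max t s + 1) - β ^ (n + 2) = ∑_{k = max t s}^{n} (β ^ (k + 1) - β ^ (k + 2))`,
and each summand is positive for `0 < β < 1`.
-/

open Matrix Finset

namespace Matrix

variable {ι R : Type*} [LinearOrder ι]

def upperOnes [Zero R] [One R] : Matrix ι ι R := of fun t k => if t ≤ k then 1 else 0

theorem conjTranspose_upperOnes [Semiring R] [StarRing R] :
    (upperOnes : Matrix ι ι R)ᴴ = upperOnesᵀ := by
  ext t k
  simp [upperOnes, apply_ite star]

variable [Fintype ι] [CommRing R]

theorem det_upperOnes : (upperOnes : Matrix ι ι R).det = 1 := by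
  have hU : (upperOnes : Matrix ι ι R).IsUpperTriangular := fun t k (hkt : k < t) => by
    simp [upperOnes, hkt.not_ge]
  rw [det_of_isUpperTriangular hU]
  simp [upperOnes]

theorem upperOnes_mul_diagonal_mul_transpose_apply [DecidableEq ι] (c : ι → R) (t s : ι) :
    (upperOnes * diagonal c * upperOnesᵀ : Matrix ι ι R) t s = ∑ k with max t s ≤ k, c k := by
  rw [mul_apply, sum_filter]
  refine sum_congr rfl fun k _ => ?_
  simp only [mul_diagonal, transpose_apply, upperOnes, of_apply, max_le_iff]
  split_ifs <;> simp_all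

theorem posDef_of_sum_max_le [PartialOrder R] [StarRing R] [StarOrderedRing R]
    [NoZeroDivisors R] [Nontrivial R] {c : ι → R} (hc : ∀ k, 0 < c k) :
    PosDef (of fun t s => ∑ k with max t s ≤ k, c k) := by
  classical
  have hD : (diagonal c).PosDef := posDef_diagonal_iff.mpr hc
  have hinj : Function.Injective (upperOnes : Matrix ι ι R)ᵀ.mulVec :=
    mulVec_injective_of_det_mem_nonZeroDivisors (by simp [det_upperOnes])
  convert hD.conjTranspose_mul_mul_same hinj using 1
  ext t s
  rw [conjTranspose_transpose_eq_transpose_conjTranspose, conjTranspose_upperOnes,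
    transpose_transpose, upperOnes_mul_diagonal_mul_transpose_apply, of_apply]

end Matrix

theorem Fin.sum_filter_le_sub' {M : Type*} [AddCommGroup M] {n : ℕ} (f : ℕ → M)
    (m : Fin (n + 1)) : ∑ k : Fin (n + 1) with m ≤ k, (f k - f (k + 1)) = f m - f (n + 1) := by
  have h := sum_map (Ici m) Fin.valEmbedding fun k => f k - f (k + 1)
  simp only [Fin.map_valEmbedding_Ici, Fin.valEmbedding_apply] at h
  rw [filter_le_eq_Ici, ← h]
  simpa only [neg_sub_neg] using sum_Ico_sub (fun k => -f k) m.is_le'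

theorem Matrix.posDef_apply_max_sub {R : Type*} [CommRing R] [PartialOrder R] [StarRing R]
    [StarOrderedRing R] [NoZeroDivisors R] [Nontrivial R] {n : ℕ} {f : ℕ → R}
    (hf : ∀ k ≤ n, f (k + 1) < f k) :
    PosDef (of fun t s : Fin (n + 1) => f (max (t : ℕ) (s : ℕ)) - f (n + 1)) := by
  have hc (k : Fin (n + 1)) : 0 < f k - f (k + 1) := sub_pos.mpr (hf k (Nat.lt_succ_iff.mp k.2))
  convert posDef_of_sum_max_le hc using 1
  ext t s
  rw [of_apply, of_apply, Fin.sum_filter_le_sub', Fin.coe_max]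

theorem TC_kernel_posDef {n : ℕ} (β : ℝ) (hβ : β ∈ Set.Ioo (0:ℝ) 1) :
    Matrix.PosDef (fun t s : Fin (n+1) => β ^ (max (t : ℕ) (s : ℕ) + 1) - β ^ (n + 2)
      : Matrix (Fin (n+1)) (Fin (n+1)) ℝ) :=
  posDef_apply_max_sub (f := fun m => β ^ (m + 1)) fun _ _ =>
    pow_lt_pow_right_of_lt_one₀ hβ.1 hβ.2 (Nat.lt_succ_self _)
end

section
/- Let D̃ = diag(d_1,…,d_{n+1}) with 0 < d_1 ≤ d_2 ≤ … ≤ d_{n+1}, let F be the (n+1)×(n+1) matrix with 1's on the diagonal and −1's on the first subdiagonal, and set R = F D̃ Fᵀ. For u = (u_1,…,u_n, 0)ᵀ and ũ = (0, u_1,…,u_n)ᵀ in ℂ^{n+1}, one has ũ* R ũ ≥ u* R u. -/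
/-!
Writing `R = F D̃ Fᵀ`, the form `w* R w` is `∑ₖ dₖ |(Fᵀ w)ₖ|²`, and `Fᵀ w` is the vector of forward
differences `wₖ - wₖ₊₁` (with `w` extended by `0`). The shifted vector `ũ` has the same differences as
`u`, moved one index up, plus one new difference `ũ₀ - u₀` in front. Since `d` is monotone, moving
each difference to a larger weight can only increase the sum, and the new term is nonnegative as
`d₀ > 0`.
-/

open Matrix

theorem re_star_dotProduct_mul_diagonal_mul_conjTranspose_mulVec {m n : Type*} [Fintype m]
    [Fintype n] [DecidableEq n] (C : Matrix m n ℂ) (e : n → ℝ) (w : m → ℂ) :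
    (star w ⬝ᵥ ((C * diagonal (fun k => (e k : ℂ)) * Cᴴ) *ᵥ w)).re
      = ∑ k, e k * Complex.normSq ((Cᴴ *ᵥ w) k) := by
  rw [← mulVec_mulVec, ← mulVec_mulVec, dotProduct_mulVec,
    ← conjTranspose_conjTranspose C, ← star_mulVec, conjTranspose_conjTranspose, dotProduct,
    Complex.re_sum]
  refine Finset.sum_congr rfl fun k _ => ?_
  simp [mulVec_diagonal, Complex.normSq_apply]
  ring

theorem re_star_dotProduct_map_ofReal_mul_diagonal_mul_transpose_mulVec {m n : Type*}
    [Fintype m] [Fintype n] [DecidableEq n] (B : Matrix m n ℝ) (d : n → ℝ) (w : m → ℂ) :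
    (star w ⬝ᵥ ((B * diagonal d * Bᵀ).map Complex.ofReal *ᵥ w)).re
      = ∑ k, d k * Complex.normSq ((Bᵀ.map Complex.ofReal *ᵥ w) k) := by
  have hmap : (B * diagonal d * Bᵀ).map Complex.ofReal
      = B.map Complex.ofReal * diagonal (fun k => (d k : ℂ)) * (B.map Complex.ofReal)ᴴ := by
    ext i j
    simp [mul_apply, diagonal_apply]
  have hconj : (B.map Complex.ofReal)ᴴ = Bᵀ.map Complex.ofReal := by
    ext i j
    simp
  rw [hmap, re_star_dotProduct_mul_diagonal_mul_conjTranspose_mulVec, hconj]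

def vecShiftLeft {α : Type*} [Zero α] {n : ℕ} (w : Fin (n + 1) → α) : Fin (n + 1) → α :=
  Fin.snoc (Fin.tail w) 0

section VecShiftLeft

variable {α : Type*} [Zero α] {n : ℕ}

@[simp]
theorem vecShiftLeft_castSucc (w : Fin (n + 1) → α) (i : Fin n) :
    vecShiftLeft w i.castSucc = w i.succ := by
  simp [vecShiftLeft, Fin.tail]

@[simp]
theorem vecShiftLeft_last (w : Fin (n + 1) → α) : vecShiftLeft w (Fin.last n) = 0 := by
  simp [vecShiftLeft]

theorem vecShiftLeft_eq_of_succ {u ut : Fin (n + 1) → α} (hu_last : u (Fin.last n) = 0)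
    (hshift : ∀ i : Fin n, ut i.succ = u i.castSucc) : vecShiftLeft ut = u := by
  ext k
  induction k using Fin.lastCases with
  | last => rw [vecShiftLeft_last, hu_last]
  | cast i => rw [vecShiftLeft_castSucc, hshift]

end VecShiftLeft

theorem diffMatrix_apply_castSucc {n : ℕ} (j : Fin (n + 1)) (i : Fin n) :
    diffMatrix n j i.castSucc = (if j = i.castSucc then 1 else 0) - if j = i.succ then 1 else 0 := by
  simp only [diffMatrix, Fin.ext_iff, Fin.val_castSucc, Fin.val_succ]
  split_ifs <;> first | omega | norm_num

theorem diffMatrix_apply_last {n : ℕ} (j : Fin (n + 1)) :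
    diffMatrix n j (Fin.last n) = if j = Fin.last n then 1 else 0 := by
  simp only [diffMatrix, Fin.ext_iff, Fin.val_last]
  split_ifs <;> first | rfl | omega

theorem diffMatrix_transpose_map_ofReal_mulVec {n : ℕ} (w : Fin (n + 1) → ℂ) :
    (diffMatrix n)ᵀ.map Complex.ofReal *ᵥ w = w - vecShiftLeft w := by
  ext k
  induction k using Fin.lastCases with
  | last =>
    simp [mulVec, dotProduct, diffMatrix_apply_last, apply_ite Complex.ofReal]
  | cast i =>
    simp [mulVec, dotProduct, diffMatrix_apply_castSucc, apply_ite Complex.ofReal, sub_mul,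
      Finset.sum_sub_distrib]

theorem re_star_dotProduct_diffMatrix_regularizer_mulVec {n : ℕ} (d : Fin (n + 1) → ℝ)
    (w : Fin (n + 1) → ℂ) :
    (star w ⬝ᵥ ((diffMatrix n * diagonal d * (diffMatrix n)ᵀ).map Complex.ofReal *ᵥ w)).re
      = ∑ k, d k * Complex.normSq (w k - vecShiftLeft w k) := by
  simp only [re_star_dotProduct_map_ofReal_mul_diagonal_mul_transpose_mulVec,
    diffMatrix_transpose_map_ofReal_mulVec, Pi.sub_apply]

theorem sum_mul_le_sum_mul_of_shift {R : Type*} [Semiring R] [PartialOrder R] [IsOrderedRing R]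
    {n : ℕ} {d a b : Fin (n + 1) → R} (hd0 : 0 ≤ d 0) (hd : Monotone d) (ha : ∀ k, 0 ≤ a k)
    (ha_last : a (Fin.last n) = 0) (hb0 : 0 ≤ b 0) (hab : ∀ i : Fin n, a i.castSucc = b i.succ) :
    ∑ k, d k * a k ≤ ∑ k, d k * b k := by
  rw [Fin.sum_univ_castSucc, ha_last, mul_zero, add_zero, Fin.sum_univ_succ]
  calc ∑ i : Fin n, d i.castSucc * a i.castSucc
      ≤ ∑ i : Fin n, d i.succ * b i.succ := by
        refine Finset.sum_le_sum fun i _ => ?_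
        rw [← hab]
        exact mul_le_mul_of_nonneg_right (hd (Fin.castSucc_le_succ i)) (ha _)
    _ ≤ d 0 * b 0 + ∑ i : Fin n, d i.succ * b i.succ :=
        le_add_of_nonneg_left (mul_nonneg hd0 hb0)

theorem TC_regularizer_shift_inequality_general {n : ℕ}
    (d : Fin (n+1) → ℝ)
    (hdpos : ∀ k, 0 < d k) (hdmono : Monotone d)
    (u ut : Fin (n+1) → ℂ)
    (hu_last : u (Fin.last n) = 0)
    (hshift : ∀ i : Fin n, ut i.succ = u i.castSucc) :
    (star u ⬝ᵥ (((diffMatrix n * Matrix.diagonal d * (diffMatrix n)ᵀ).map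
        (Complex.ofReal)) *ᵥ u)).re
      ≤ (star ut ⬝ᵥ (((diffMatrix n * Matrix.diagonal d * (diffMatrix n)ᵀ).map
        (Complex.ofReal)) *ᵥ ut)).re := by
  rw [re_star_dotProduct_diffMatrix_regularizer_mulVec,
    re_star_dotProduct_diffMatrix_regularizer_mulVec, vecShiftLeft_eq_of_succ hu_last hshift]
  refine sum_mul_le_sum_mul_of_shift (hdpos 0).le hdmono (fun _ => Complex.normSq_nonneg _)
    (by simp [hu_last]) (Complex.normSq_nonneg _) fun i => ?_
  rw [vecShiftLeft_castSucc, hshift]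

theorem TC_regularizer_shift_inequality {n : ℕ}
    (d : Fin (n+1) → ℝ)
    (hdpos : ∀ k, 0 < d k) (hdmono : Monotone d)
    (u ut : Fin (n+1) → ℂ)
    (hu_last : u (Fin.last n) = 0)
    (hut0 : ut 0 = 0)
    (hshift : ∀ i : Fin n, ut i.succ = u i.castSucc) :
    (star u ⬝ᵥ (((diffMatrix n * Matrix.diagonal d * (diffMatrix n)ᵀ).map
        (Complex.ofReal)) *ᵥ u)).re
      ≤ (star ut ⬝ᵥ (((diffMatrix n * Matrix.diagonal d * (diffMatrix n)ᵀ).map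
        (Complex.ofReal)) *ᵥ ut)).re :=
  TC_regularizer_shift_inequality_general d hdpos hdmono u ut hu_last hshift
end

section
/- Let Σ = L Lᵀ be any square-root factorization of a positive definite (n+1)×(n+1) matrix Σ, and define Φ = √(N−n) Lᵀ and ṽ = (√(N−n)/b̃₀) L^{−1} e_1 for constants N > n and b̃₀ ≠ 0. Then the regularized least-squares solution b̂ = λ K Φᵀ (λ Φ K Φᵀ + I)^{−1} ṽ equals b̃₀^{−1} (Σ + ((N−n) λ K)^{−1})^{−1} e_1, and in particular does not depend on the choice of the square-root factor L. -/
open Matrix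

/-! With `Φ = √(N-n) Lᵀ` and `M = (N-n) λ K` we have `λ Φ K Φᵀ = Lᵀ M L`, and the push-through
identity `(L Lᵀ + M⁻¹) M L = L (Lᵀ M L + 1)` turns the estimate into `b̃₀⁻¹ (L Lᵀ + M⁻¹)⁻¹ e₁`,
in which `L` only appears through `S = L Lᵀ`. -/

theorem Matrix.inv_mul_add_inv {m R : Type*} [Fintype m] [DecidableEq m] [CommRing R]
    {L B M : Matrix m m R} (hL : IsUnit L.det) (hM : IsUnit M.det)
    (hA : IsUnit (B * M * L + 1).det) :
    (L * B + M⁻¹)⁻¹ = M * L * (B * M * L + 1)⁻¹ * L⁻¹ := by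
  refine inv_eq_right_inv ?_
  have hfactor : (L * B + M⁻¹) * (M * L) = L * (B * M * L + 1) := by
    rw [Matrix.add_mul, Matrix.mul_add, ← Matrix.mul_assoc M⁻¹, nonsing_inv_mul _ hM,
      Matrix.one_mul, Matrix.mul_one]
    simp only [Matrix.mul_assoc]
  rw [← Matrix.mul_assoc, ← Matrix.mul_assoc, hfactor, Matrix.mul_assoc L,
    mul_nonsing_inv _ hA, Matrix.mul_one, mul_nonsing_inv _ hL]

theorem Matrix.PosDef.isUnit_det_transpose_mul_mul_add_one {m : Type*} [Fintype m] [DecidableEq m]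
    {M : Matrix m m ℝ} (hM : M.PosDef) (L : Matrix m m ℝ) : IsUnit (Lᵀ * M * L + 1).det := by
  have hLML : (Lᵀ * M * L).PosSemidef := by
    simpa using hM.posSemidef.conjTranspose_mul_mul_same L
  exact (isUnit_iff_isUnit_det _).mp (PosDef.posSemidef_add hLML PosDef.one).isUnit

theorem estimate_independent_of_sqrt_factor_general {n N : ℕ} (hNn : n < N)
    (S L : Matrix (Fin (n+1)) (Fin (n+1)) ℝ)
    (hL : IsUnit L.det) (hfact : S = L * Lᵀ)
    (K : Matrix (Fin (n+1)) (Fin (n+1)) ℝ) (hK : K.PosDef)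
    (lam : ℝ) (hlam : 0 < lam)
    (b0 : ℝ) :
    let Φ : Matrix (Fin (n+1)) (Fin (n+1)) ℝ := Real.sqrt ((N : ℝ) - n) • Lᵀ
    let v : Fin (n+1) → ℝ :=
      (Real.sqrt ((N : ℝ) - n) / b0) • (L⁻¹ *ᵥ ((Pi.single (0 : Fin (n+1)) (1 : ℝ)) : Fin (n+1) → ℝ))
    (lam • (K * Φᵀ) * (lam • (Φ * K * Φᵀ) + 1)⁻¹) *ᵥ v
      = b0⁻¹ • ((S + ((((N : ℝ) - n) * lam) • K)⁻¹)⁻¹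
          *ᵥ ((Pi.single (0 : Fin (n+1)) (1 : ℝ)) : Fin (n+1) → ℝ)) := by
  intro Φ v
  have hc : 0 < (N : ℝ) - n := sub_pos.mpr (by exact_mod_cast hNn)
  have hs := Real.mul_self_sqrt hc.le
  set M := (((N : ℝ) - n) * lam) • K
  have hM : M.PosDef := hK.smul (mul_pos hc hlam)
  have hΦKΦ : lam • (Φ * K * Φᵀ) = Lᵀ * M * L := by
    simp only [Φ, M, transpose_smul, transpose_transpose, smul_mul_assoc, mul_smul_comm, smul_smul]
    congr 1
    linear_combination lam * hs
  rw [hΦKΦ, hfact, inv_mul_add_inv hL ((isUnit_iff_isUnit_det _).mp hM.isUnit)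
    (hM.isUnit_det_transpose_mul_mul_add_one L)]
  simp only [Φ, v, M, transpose_smul, transpose_transpose, mul_smul_comm, smul_mul_assoc,
    mulVec_smul, mulVec_mulVec, smul_mulVec, smul_smul]
  congr 1
  linear_combination b0⁻¹ * lam * hs

/-- The kernel-based ME estimate does not depend on the square-root factor `L` of `S`. -/
theorem estimate_independent_of_sqrt_factor {n N : ℕ} (hNn : n < N)
    (S L : Matrix (Fin (n+1)) (Fin (n+1)) ℝ)
    (hS : S.PosDef) (hL : IsUnit L.det) (hfact : S = L * Lᵀ)
    (K : Matrix (Fin (n+1)) (Fin (n+1)) ℝ) (hK : K.PosDef)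
    (lam : ℝ) (hlam : 0 < lam)
    (b0 : ℝ) (hb0 : b0 ≠ 0) :
    let Φ : Matrix (Fin (n+1)) (Fin (n+1)) ℝ := Real.sqrt ((N : ℝ) - n) • Lᵀ
    let v : Fin (n+1) → ℝ :=
      (Real.sqrt ((N : ℝ) - n) / b0) • (L⁻¹ *ᵥ ((Pi.single (0 : Fin (n+1)) (1 : ℝ)) : Fin (n+1) → ℝ))
    (lam • (K * Φᵀ) * (lam • (Φ * K * Φᵀ) + 1)⁻¹) *ᵥ v
      = b0⁻¹ • ((S + ((((N : ℝ) - n) * lam) • K)⁻¹)⁻¹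
          *ᵥ ((Pi.single (0 : Fin (n+1)) (1 : ℝ)) : Fin (n+1) → ℝ)) :=
  estimate_independent_of_sqrt_factor_general hNn S L hL hfact K hK lam hlam b0
end
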